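/- Let m ≥ 1, t₁,…,t_m be real numbers, cₖ := (2k)!/(2^{2k}(k!)²), and let u : ℝ → ℝ be differentiable at t₀ and satisfy Σ_{j=1}^{m} tⱼ·cⱼ·u(t)^{2j} = −t for all t in a neighborhood of t₀. Fix z₀ > 0 with z₀² < u(t₀)². Define X(z,t) := √(u(t)² − z²) and Y(z,t) := z · Σ_{j=1}^{m} tⱼ·Σ_{k=0}^{j−1} cₖ·X(z,t)^{2(j−k)−1}·u(t)^{2k}. Then at the point (z₀, t₀) the partial derivatives ∂ₜY, ∂_zX, ∂_zY, ∂ₜX exist and satisfy (∂ₜY)·(∂_zX) − (∂_zY)·(∂ₜX) = 1. -/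

import Mathlib

/-!
Write `Y = z · P(X, u)` with `X² = u² - z²`, so `∂_z X = -z / X` and `∂_t X = u u̇ / X`. In the
bracket `Y_t X_z - Y_z X_t` the terms containing `∂_X P` cancel, leaving `-u̇ (u P + z² ∂_u P) / X`.
The recurrence `(2k + 2) c_{k+1} = (2k + 1) c_k` makes `u P + (u² - X²) ∂_u P` telescope to
`X · Σⱼ tⱼ cⱼ 2j u^{2j-1}`, which is `X` times the `u`-derivative of the string polynomial; by the
string equation that derivative times `u̇` is `-1`.
-/

/-- The normalized central binomial coefficient cₖ = (2k)!/(2^{2k}(k!)²). -/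
noncomputable def cGD (k : ℕ) : ℝ :=
  (Nat.factorial (2 * k) : ℝ) / (2 ^ (2 * k) * (Nat.factorial k : ℝ) ^ 2)

theorem cGD_succ (k : ℕ) : cGD (k + 1) = cGD k * (2 * k + 1) / (2 * k + 2) := by
  unfold cGD
  rw [show 2 * (k + 1) = 2 * k + 1 + 1 by ring, Nat.factorial_succ, Nat.factorial_succ,
    Nat.factorial_succ]
  have hk : (Nat.factorial k : ℝ) ≠ 0 := Nat.cast_ne_zero.mpr k.factorial_ne_zero
  push_cast
  rw [pow_succ, pow_succ]
  field_simp
  ring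

-- `spectralPoly s tc x w` is the paper's `ỹ(x) / √(u² - x²)` at `u = w`, with `tⱼ = tc j` for
-- `j ∈ s`; `spectralPolyDX` and `spectralPolyDW` are its partial derivatives in `x` and `w`.
noncomputable def spectralPoly (s : Finset ℕ) (tc : ℕ → ℝ) (x w : ℝ) : ℝ :=
  ∑ j ∈ s, tc j * ∑ k ∈ Finset.range j, cGD k * x ^ (2 * (j - k) - 1) * w ^ (2 * k)

noncomputable def spectralPolyDX (s : Finset ℕ) (tc : ℕ → ℝ) (x w : ℝ) : ℝ :=
  ∑ j ∈ s, tc j * ∑ k ∈ Finset.range j,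
    cGD k * (((2 * (j - k) - 1 : ℕ) : ℝ) * x ^ (2 * (j - k) - 1 - 1)) * w ^ (2 * k)

noncomputable def spectralPolyDW (s : Finset ℕ) (tc : ℕ → ℝ) (x w : ℝ) : ℝ :=
  ∑ j ∈ s, tc j * ∑ k ∈ Finset.range j,
    cGD k * x ^ (2 * (j - k) - 1) * (((2 * k : ℕ) : ℝ) * w ^ (2 * k - 1))

noncomputable def stringPoly (s : Finset ℕ) (tc : ℕ → ℝ) (w : ℝ) : ℝ :=
  ∑ j ∈ s, tc j * cGD j * w ^ (2 * j)

noncomputable def stringPolyDeriv (s : Finset ℕ) (tc : ℕ → ℝ) (w : ℝ) : ℝ :=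
  ∑ j ∈ s, tc j * cGD j * (((2 * j : ℕ) : ℝ) * w ^ (2 * j - 1))

theorem HasDerivAt.spectralPoly {a b : ℝ → ℝ} {a' b' t : ℝ} (ha : HasDerivAt a a' t)
    (hb : HasDerivAt b b' t) (s : Finset ℕ) (tc : ℕ → ℝ) :
    HasDerivAt (fun τ => spectralPoly s tc (a τ) (b τ))
      (a' * spectralPolyDX s tc (a t) (b t) + b' * spectralPolyDW s tc (a t) (b t)) t := by
  refine (HasDerivAt.fun_sum fun j _ => (HasDerivAt.fun_sum fun k _ =>
    ((ha.fun_pow (2 * (j - k) - 1)).const_mul (cGD k)).fun_mul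
      (hb.fun_pow (2 * k))).const_mul (tc j)).congr_deriv ?_
  simp only [spectralPolyDX, spectralPolyDW, Finset.mul_sum, ← Finset.sum_add_distrib]
  exact Finset.sum_congr rfl fun j _ => Finset.sum_congr rfl fun k _ => by ring

theorem hasDerivAt_stringPoly (s : Finset ℕ) (tc : ℕ → ℝ) (w : ℝ) :
    HasDerivAt (stringPoly s tc) (stringPolyDeriv s tc w) w :=
  HasDerivAt.fun_sum fun j _ => (hasDerivAt_pow (2 * j) w).const_mul (tc j * cGD j)

theorem stringPolyDeriv_mul_eq_neg_one {s : Finset ℕ} {tc : ℕ → ℝ} {u : ℝ → ℝ} {u' t₀ : ℝ}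
    (hu : HasDerivAt u u' t₀) (hstring : ∀ᶠ t in nhds t₀, stringPoly s tc (u t) = -t) :
    stringPolyDeriv s tc (u t₀) * u' = -1 :=
  (((hasDerivAt_stringPoly s tc (u t₀)).comp t₀ hu).congr_of_eventuallyEq
    (hstring.mono fun _ ht => ht.symm)).unique (hasDerivAt_neg t₀)

-- Telescopes along `k` with primitive `cGD k * 2k * w ^ (2k - 1) * x ^ (2(j - k) + 1)`.
theorem cGD_sum_telescope (x w : ℝ) (j : ℕ) :
    w * (∑ k ∈ Finset.range j, cGD k * x ^ (2 * (j - k) - 1) * w ^ (2 * k))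
      + (w ^ 2 - x ^ 2) * (∑ k ∈ Finset.range j,
          cGD k * x ^ (2 * (j - k) - 1) * (((2 * k : ℕ) : ℝ) * w ^ (2 * k - 1)))
    = x * (cGD j * (((2 * j : ℕ) : ℝ) * w ^ (2 * j - 1))) := by
  set f : ℕ → ℝ := fun k => cGD k * ((2 * k : ℕ) : ℝ) * w ^ (2 * k - 1) * x ^ (2 * (j - k) + 1)
    with hf
  rw [Finset.mul_sum, Finset.mul_sum, ← Finset.sum_add_distrib]
  have hstep : ∀ k ∈ Finset.range j,
      w * (cGD k * x ^ (2 * (j - k) - 1) * w ^ (2 * k))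
        + (w ^ 2 - x ^ 2) * (cGD k * x ^ (2 * (j - k) - 1) * (((2 * k : ℕ) : ℝ) * w ^ (2 * k - 1)))
      = f (k + 1) - f k := by
    intro k hk
    obtain ⟨d, rfl⟩ : ∃ d, j = k + d + 1 := ⟨j - k - 1, by simp at hk; omega⟩
    simp only [hf, show 2 * (k + d + 1 - k) - 1 = 2 * d + 1 by omega,
      show 2 * (k + d + 1 - k) + 1 = 2 * d + 3 by omega,
      show 2 * (k + d + 1 - (k + 1)) + 1 = 2 * d + 1 by omega]
    rcases k with _ | k
    · norm_num [cGD]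
    · rw [show 2 * (k + 1) - 1 = 2 * k + 1 by omega, show 2 * (k + 1 + 1) - 1 = 2 * k + 3 by omega,
        cGD_succ (k + 1)]
      push_cast
      field_simp
      ring
  rw [Finset.sum_congr rfl hstep, Finset.sum_range_sub f j]
  simp only [hf, Nat.sub_self, Nat.mul_zero, Nat.cast_zero, zero_add, pow_one]
  ring

theorem mul_spectralPoly_add_mul_spectralPolyDW (s : Finset ℕ) (tc : ℕ → ℝ) (x w : ℝ) :
    w * spectralPoly s tc x w + (w ^ 2 - x ^ 2) * spectralPolyDW s tc x w
      = x * stringPolyDeriv s tc w := by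
  rw [spectralPoly, spectralPolyDW, stringPolyDeriv, Finset.mul_sum s, Finset.mul_sum s,
    Finset.mul_sum s, ← Finset.sum_add_distrib]
  exact Finset.sum_congr rfl fun j _ => by linear_combination tc j * cGD_sum_telescope x w j

theorem poisson_bracket_relation_general (m : ℕ) (tc : ℕ → ℝ) (u : ℝ → ℝ)
    (t₀ z₀ : ℝ) (hu : DifferentiableAt ℝ u t₀)
    (hstring : ∀ᶠ t in nhds t₀,
      ∑ j ∈ Finset.Icc 1 m, tc j * cGD j * u t ^ (2 * j) = -t)
    (hzu : z₀ ^ 2 < u t₀ ^ 2) :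
    ∃ Yt Xz Yz Xt : ℝ,
      HasDerivAt (fun t => z₀ * ∑ j ∈ Finset.Icc 1 m, tc j *
          ∑ k ∈ Finset.range j,
            cGD k * Real.sqrt (u t ^ 2 - z₀ ^ 2) ^ (2 * (j - k) - 1) * u t ^ (2 * k))
        Yt t₀ ∧
      HasDerivAt (fun z => Real.sqrt (u t₀ ^ 2 - z ^ 2)) Xz z₀ ∧
      HasDerivAt (fun z => z * ∑ j ∈ Finset.Icc 1 m, tc j *
          ∑ k ∈ Finset.range j,
            cGD k * Real.sqrt (u t₀ ^ 2 - z ^ 2) ^ (2 * (j - k) - 1) * u t₀ ^ (2 * k))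
        Yz z₀ ∧
      HasDerivAt (fun t => Real.sqrt (u t ^ 2 - z₀ ^ 2)) Xt t₀ ∧
      Yt * Xz - Yz * Xt = 1 := by
  obtain ⟨u', hu'⟩ : ∃ u', HasDerivAt u u' t₀ := ⟨_, hu.hasDerivAt⟩
  have hpos : 0 < u t₀ ^ 2 - z₀ ^ 2 := by linarith
  have hX : 0 < √(u t₀ ^ 2 - z₀ ^ 2) := Real.sqrt_pos.mpr hpos
  have hXsq : √(u t₀ ^ 2 - z₀ ^ 2) ^ 2 = u t₀ ^ 2 - z₀ ^ 2 := Real.sq_sqrt hpos.le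
  have hXt := ((hu'.fun_pow 2).sub_const (z₀ ^ 2)).sqrt hpos.ne'
  have hXz := ((hasDerivAt_pow 2 z₀).const_sub (u t₀ ^ 2)).sqrt hpos.ne'
  have hYt := (hXt.spectralPoly hu' (Finset.Icc 1 m) tc).const_mul z₀
  have hYz := (hasDerivAt_id' z₀).fun_mul
    (hXz.spectralPoly (hasDerivAt_const z₀ (u t₀)) (Finset.Icc 1 m) tc)
  have hD : stringPolyDeriv (Finset.Icc 1 m) tc (u t₀) * u' = -1 :=
    stringPolyDeriv_mul_eq_neg_one hu' hstring
  set X := √(u t₀ ^ 2 - z₀ ^ 2)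
  have hkey : u t₀ * spectralPoly (Finset.Icc 1 m) tc X (u t₀)
      + z₀ ^ 2 * spectralPolyDW (Finset.Icc 1 m) tc X (u t₀)
      = X * stringPolyDeriv (Finset.Icc 1 m) tc (u t₀) := by
    rw [← mul_spectralPoly_add_mul_spectralPolyDW, hXsq]
    ring
  refine ⟨_, _, _, _, hYt, hXz, hYz, hXt, ?_⟩
  field_simp
  linear_combination (-4 * u' * X) * hkey - 4 * X ^ 2 * hD

/-- The Poisson bracket relation {y, x} = 1 for the parametrization
X(z,t) = √(u(t)² − z²), Y(z,t) = z·Σⱼ tⱼ Σ_{k<j} cₖ X^{2(j−k)−1} u(t)^{2k}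
of the spectral curve of the (2m,1) minimal model, where u satisfies the
leading-order string equation Σⱼ tⱼcⱼu(t)^{2j} = −t near t₀:
the partial derivatives ∂ₜY, ∂_zX, ∂_zY, ∂ₜX exist at (z₀,t₀) and
(∂ₜY)(∂_zX) − (∂_zY)(∂ₜX) = 1. -/
theorem poisson_bracket_relation (m : ℕ) (hm : 1 ≤ m) (tc : ℕ → ℝ) (u : ℝ → ℝ)
    (t₀ z₀ : ℝ) (hu : DifferentiableAt ℝ u t₀)
    (hstring : ∀ᶠ t in nhds t₀,
      ∑ j ∈ Finset.Icc 1 m, tc j * cGD j * u t ^ (2 * j) = -t)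
    (hz : 0 < z₀) (hzu : z₀ ^ 2 < u t₀ ^ 2) :
    ∃ Yt Xz Yz Xt : ℝ,
      HasDerivAt (fun t => z₀ * ∑ j ∈ Finset.Icc 1 m, tc j *
          ∑ k ∈ Finset.range j,
            cGD k * Real.sqrt (u t ^ 2 - z₀ ^ 2) ^ (2 * (j - k) - 1) * u t ^ (2 * k))
        Yt t₀ ∧
      HasDerivAt (fun z => Real.sqrt (u t₀ ^ 2 - z ^ 2)) Xz z₀ ∧
      HasDerivAt (fun z => z * ∑ j ∈ Finset.Icc 1 m, tc j *
          ∑ k ∈ Finset.range j,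
            cGD k * Real.sqrt (u t₀ ^ 2 - z ^ 2) ^ (2 * (j - k) - 1) * u t₀ ^ (2 * k))
        Yz z₀ ∧
      HasDerivAt (fun t => Real.sqrt (u t ^ 2 - z₀ ^ 2)) Xt t₀ ∧
      Yt * Xz - Yz * Xt = 1 :=
  poisson_bracket_relation_general m tc u t₀ z₀ hu hstring hzu
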